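/- arXiv:1407.6768 — 2 statements merged into one kernel-verified Lean document; each statement's English description precedes it below -/
import Mathlib

section
/- The locally accessible joint entropy satisfies S_A(ρ_SA) = H({p_a}) + S(ρ_S | {Π_A^k}) = S(Φ_A(ρ_SA)), and hence the classical demon's work W^C = kT[log₂ d_SA − S_A(ρ_SA)] never exceeds the quantum demon's work W^Q = kT[log₂ d_SA − S(ρ_SA)]. -/
open Matrix BigOperators Kronecker

/-- Von Neumann entropy in base 2, via eigenvalues of a Hermitian matrix. -/
noncomputable def Sent {d : Type*} [Fintype d] [DecidableEq d] (ρ : Matrix d d ℂ) : ℝ :=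
  if h : ρ.IsHermitian then ∑ i, Real.negMulLog (h.eigenvalues i) / Real.log 2 else 0

/-- Rank-one projector |v⟩⟨v| (for a unit vector v). -/
def proj {d : Type*} (v : d → ℂ) : Matrix d d ℂ := Matrix.vecMulVec v (star v)

/-- `e` is an orthonormal basis (a complete family of rank-one orthogonal projectors). -/
def ONB {d : Type*} [Fintype d] [DecidableEq d] (e : d → d → ℂ) : Prop :=
  ∀ k l, star (e k) ⬝ᵥ e l = if k = l then 1 else 0

variable {s a : Type*} [Fintype s] [DecidableEq s] [Fintype a] [DecidableEq a]

/-- Partial trace over the system `S` : the marginal on `A`. -/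
noncomputable def ptrS (ρ : Matrix (s × a) (s × a) ℂ) : Matrix a a ℂ :=
  Matrix.of fun i j => ∑ k, ρ (k, i) (k, j)

/-- Partial trace over the apparatus `A` : the marginal on `S`. -/
noncomputable def ptrA (ρ : Matrix (s × a) (s × a) ℂ) : Matrix s s ℂ :=
  Matrix.of fun i j => ∑ k, ρ (i, k) (j, k)

/-- Non-selective rank-one projective measurement on `A`:
`Φ_A(ρ) = Σ_k (I_S ⊗ Π_A^k) ρ (I_S ⊗ Π_A^k)`. -/
noncomputable def pinchA (e : a → a → ℂ) (ρ : Matrix (s × a) (s × a) ℂ) :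
    Matrix (s × a) (s × a) ℂ :=
  ∑ k, ((1 : Matrix s s ℂ) ⊗ₖ proj (e k)) * ρ * ((1 : Matrix s s ℂ) ⊗ₖ proj (e k))

/-- Outcome probability `p_k = Tr[(I_S ⊗ Π_A^k) ρ]`. -/
noncomputable def pOut (e : a → a → ℂ) (ρ : Matrix (s × a) (s × a) ℂ) (k : a) : ℝ :=
  (((1 : Matrix s s ℂ) ⊗ₖ proj (e k)) * ρ).trace.re

/-- Normalized post-measurement state `ρ_k`. -/
noncomputable def postState (e : a → a → ℂ) (ρ : Matrix (s × a) (s × a) ℂ) (k : a) :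
    Matrix (s × a) (s × a) ℂ :=
  ((pOut e ρ k : ℂ))⁻¹ •
    (((1 : Matrix s s ℂ) ⊗ₖ proj (e k)) * ρ * ((1 : Matrix s s ℂ) ⊗ₖ proj (e k)))

/-!
Write `M_k = ⟨e_k|ρ|e_k⟩_A` for the blocks of `ρ`, so that `p_k = tr M_k`,
`ρ_k = p_k⁻¹ M_k ⊗ |e_k⟩⟨e_k|` and `Φ_A(ρ) = ∑_k M_k ⊗ |e_k⟩⟨e_k|`. The latter is block diagonal:
if `u_{k,i}` is an eigenbasis of `M_k` with eigenvalues `ν_{k,i}`, then `u_{k,i} ⊗ e_k` is an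
eigenbasis of `Φ_A(ρ)` with the same eigenvalues. Hence `S(Φ_A(ρ)) = ∑_k S(M_k)`, and the
grouping rule of the Shannon entropy splits each `S(M_k)` as `H(p_k) + p_k S(ρ_k)`.

For the inequality, the eigenvalues `ν_{k,i} = ⟨u_{k,i} ⊗ e_k, ρ (u_{k,i} ⊗ e_k)⟩` are the
diagonal of `ρ` in that basis, which is obtained from the spectrum of `ρ` by the doubly stochastic
matrix of squared overlaps of the two eigenbases; concavity of `x ↦ -x log x` then gives
`S(ρ) ≤ S(Φ_A(ρ))`.
-/

open scoped ComplexOrder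

theorem star_mulVec_dotProduct_mulVec {m n k : Type*} [Fintype m] [Fintype n] [Fintype k]
    (B : Matrix m n ℂ) (C : Matrix m k ℂ) (x : n → ℂ) (y : k → ℂ) :
    star (B *ᵥ x) ⬝ᵥ (C *ᵥ y) = star x ⬝ᵥ ((Bᴴ * C) *ᵥ y) := by
  rw [star_mulVec, dotProduct_mulVec, vecMul_vecMul, ← dotProduct_mulVec]

theorem Real.sum_negMulLog_eq_negMulLog_sum_add {n : Type*} [Fintype n] {ν : n → ℝ}
    (hν : ∀ i, 0 ≤ ν i) :
    ∑ i, Real.negMulLog (ν i) =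
      Real.negMulLog (∑ i, ν i) + (∑ i, ν i) * ∑ i, Real.negMulLog ((∑ j, ν j)⁻¹ * ν i) := by
  set p := ∑ i, ν i with hp_def
  rcases eq_or_ne p 0 with hp | hp
  · have hν0 : ∀ i, ν i = 0 := congrFun ((Fintype.sum_eq_zero_iff_of_nonneg hν).mp hp)
    simp [hν0, hp]
  · have hsplit : ∀ i, Real.negMulLog (ν i) =
        p⁻¹ * ν i * Real.negMulLog p + p * Real.negMulLog (p⁻¹ * ν i) := fun i => by
      rw [← Real.negMulLog_mul, mul_inv_cancel_left₀ hp]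
    rw [Finset.sum_congr rfl fun i _ => hsplit i, Finset.sum_add_distrib, ← Finset.sum_mul,
      ← Finset.mul_sum, ← Finset.mul_sum, ← hp_def, inv_mul_cancel₀ hp, one_mul]

theorem ConcaveOn.sum_le_sum_comp_mulVec {n : Type*} [Fintype n] [DecidableEq n] {S : Set ℝ}
    {f : ℝ → ℝ} (hf : ConcaveOn ℝ S f) {D : Matrix n n ℝ} (hD : D ∈ doublyStochastic ℝ n)
    {x : n → ℝ} (hx : ∀ j, x j ∈ S) :
    ∑ j, f (x j) ≤ ∑ i, f ((D *ᵥ x) i) :=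
  calc ∑ j, f (x j) = ∑ i, ∑ j, D i j * f (x j) := by
        rw [Finset.sum_comm]
        simp [← Finset.sum_mul, sum_col_of_mem_doublyStochastic hD]
    _ ≤ ∑ i, f ((D *ᵥ x) i) := Finset.sum_le_sum fun i _ =>
        hf.le_map_sum (fun j _ => nonneg_of_mem_doublyStochastic hD)
          (sum_row_of_mem_doublyStochastic hD i) fun j _ => hx j

section Eigenbasis

variable {n : Type*} [Fintype n] [DecidableEq n]

theorem ONB.conjTranspose_mul_self {w : n → n → ℂ} (hw : ONB w) :
    ((of w)ᵀ)ᴴ * (of w)ᵀ = 1 := by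
  ext i j
  simpa [Matrix.mul_apply, Matrix.one_apply, dotProduct] using hw i j

theorem ONB.mul_conjTranspose_self {w : n → n → ℂ} (hw : ONB w) :
    (of w)ᵀ * ((of w)ᵀ)ᴴ = 1 :=
  mul_eq_one_comm.mp hw.conjTranspose_mul_self

def IsEigenbasis (A : Matrix n n ℂ) (w : n → n → ℂ) (μ : n → ℝ) : Prop :=
  ONB w ∧ ∀ i, A *ᵥ w i = (μ i : ℂ) • w i

theorem isEigenbasis_eigenvectorBasis {A : Matrix n n ℂ} (hA : A.IsHermitian) :
    IsEigenbasis A (fun i => ⇑(hA.eigenvectorBasis i)) hA.eigenvalues := by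
  refine ⟨fun i j => ?_, fun i => ?_⟩
  · have h := (orthonormal_iff_ite.mp hA.eigenvectorBasis.orthonormal) i j
    rw [EuclideanSpace.inner_eq_star_dotProduct] at h
    exact (dotProduct_comm _ _).trans h
  · rw [hA.mulVec_eigenvectorBasis]
    ext
    simp [Complex.real_smul]

theorem ONB.isEigenbasis_one {w : n → n → ℂ} (hw : ONB w) : IsEigenbasis 1 w 1 :=
  ⟨hw, fun i => by simp⟩

namespace IsEigenbasis

variable {A : Matrix n n ℂ} {w : n → n → ℂ} {μ : n → ℝ}

theorem smul (h : IsEigenbasis A w μ) (c : ℝ) : IsEigenbasis ((c : ℂ) • A) w (c • μ) :=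
  ⟨h.1, fun i => by rw [smul_mulVec, h.2 i, smul_smul]; simp⟩

theorem eq_mul_diagonal_mul (h : IsEigenbasis A w μ) :
    A = (of w)ᵀ * diagonal (fun i => (μ i : ℂ)) * ((of w)ᵀ)ᴴ := by
  have hAW : A * (of w)ᵀ = (of w)ᵀ * diagonal (fun i => (μ i : ℂ)) := by
    ext i j
    rw [mul_diagonal, mul_apply]
    simpa [mulVec, dotProduct, mul_comm] using congrFun (h.2 j) i
  rw [← hAW, mul_assoc, h.1.mul_conjTranspose_self, mul_one]

theorem isHermitian (h : IsEigenbasis A w μ) : A.IsHermitian := by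
  rw [IsHermitian, h.eq_mul_diagonal_mul]
  simp [Matrix.conjTranspose_mul, Matrix.diagonal_conjTranspose, mul_assoc, Pi.star_def]

theorem charpoly (h : IsEigenbasis A w μ) :
    A.charpoly = ∏ i, (Polynomial.X - Polynomial.C (μ i : ℂ)) := by
  rw [h.eq_mul_diagonal_mul, mul_assoc, charpoly_mul_comm, mul_assoc,
    h.1.conjTranspose_mul_self, mul_one, charpoly_diagonal]

theorem sum_comp_eigenvalues (h : IsEigenbasis A w μ) (hA : A.IsHermitian) (f : ℝ → ℝ) :
    ∑ i, f (hA.eigenvalues i) = ∑ i, f (μ i) := by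
  have hroots := hA.roots_charpoly_eq_eigenvalues
  rw [h.charpoly, Polynomial.roots_prod _ _ (Finset.prod_ne_zero_iff.mpr
    fun i _ => Polynomial.X_sub_C_ne_zero _)] at hroots
  have hmap : Finset.univ.val.map hA.eigenvalues = Finset.univ.val.map μ :=
    Multiset.map_injective Complex.ofReal_injective (by simpa [Multiset.map_map] using hroots.symm)
  have := congrArg (fun m => (m.map f).sum) hmap
  simp only [Multiset.map_map] at this
  exact this

theorem sent_eq (h : IsEigenbasis A w μ) :
    Sent A = ∑ i, Real.negMulLog (μ i) / Real.log 2 := by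
  rw [Sent, dif_pos h.isHermitian,
    h.sum_comp_eigenvalues _ fun x => Real.negMulLog x / Real.log 2]

theorem star_dotProduct_mulVec (h : IsEigenbasis A w μ) (x : n → ℂ) :
    star x ⬝ᵥ (A *ᵥ x) = ∑ j, (μ j : ℂ) * Complex.normSq (star (w j) ⬝ᵥ x) := by
  rw [h.eq_mul_diagonal_mul, ← mulVec_mulVec, ← mulVec_mulVec, dotProduct_mulVec,
    ← conjTranspose_conjTranspose (of w)ᵀ, ← star_mulVec, conjTranspose_conjTranspose]
  simp only [dotProduct, mulVec_diagonal, Pi.star_apply, Complex.normSq_eq_conj_mul_self,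
    RCLike.star_def]
  refine Finset.sum_congr rfl fun j _ => ?_
  simp only [mulVec, dotProduct, conjTranspose_apply, transpose_apply, of_apply, RCLike.star_def]
  ring

theorem star_dotProduct_mulVec_self (h : IsEigenbasis A w μ) (i : n) :
    star (w i) ⬝ᵥ (A *ᵥ w i) = μ i := by
  rw [h.2, dotProduct_smul, h.1, if_pos rfl, smul_eq_mul, mul_one]

end IsEigenbasis

theorem ONB.sum_normSq_dotProduct {w : n → n → ℂ} (hw : ONB w) (x : n → ℂ) :
    ∑ j, Complex.normSq (star (w j) ⬝ᵥ x) = (star x ⬝ᵥ x).re := by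
  simpa using congrArg Complex.re (hw.isEigenbasis_one.star_dotProduct_mulVec x).symm

/-- The squared overlaps `|⟨v_j, w_i⟩|²` of the eigenbasis `v` of `A` with `w` form a doubly
stochastic matrix carrying the spectrum of `A` to its diagonal in the basis `w`. -/
theorem sum_negMulLog_eigenvalues_le {A : Matrix n n ℂ} (hA : A.PosSemidef) {w : n → n → ℂ}
    (hw : ONB w) :
    ∑ j, Real.negMulLog (hA.1.eigenvalues j) ≤
      ∑ i, Real.negMulLog (star (w i) ⬝ᵥ (A *ᵥ w i)).re := by
  have hv := isEigenbasis_eigenvectorBasis hA.1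
  set v : n → n → ℂ := fun j => ⇑(hA.1.eigenvectorBasis j)
  set D : Matrix n n ℝ := of fun i j => Complex.normSq (star (v j) ⬝ᵥ w i)
  have hunit : ∀ (u : n → n → ℂ), ONB u → ∀ i, (star (u i) ⬝ᵥ u i).re = 1 := fun u hu i => by
    simp [hu i i]
  have hD : D ∈ doublyStochastic ℝ n := by
    refine mem_doublyStochastic_iff_sum.mpr ⟨fun i j => Complex.normSq_nonneg _, fun i => ?_,
      fun j => ?_⟩
    · simpa [D, hunit w hw i] using hv.1.sum_normSq_dotProduct (w i)
    · have hswap : ∀ i, D i j = Complex.normSq (star (w i) ⬝ᵥ v j) := fun i => by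
        rw [← Complex.normSq_conj, ← Complex.star_def, star_dotProduct, star_star]
        rfl
      simpa [hswap, hunit v hv.1 j] using hw.sum_normSq_dotProduct (v j)
  have hdiag : ∀ i, (star (w i) ⬝ᵥ (A *ᵥ w i)).re = (D *ᵥ hA.1.eigenvalues) i := fun i => by
    rw [hv.star_dotProduct_mulVec]
    simp [D, mulVec, dotProduct, mul_comm]
  simp only [hdiag]
  exact Real.concaveOn_negMulLog.sum_le_sum_comp_mulVec hD fun j => hA.eigenvalues_nonneg j

theorem sent_zero : Sent (0 : Matrix n n ℂ) = 0 := by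
  rw [Sent, dif_pos isHermitian_zero, isHermitian_zero.eigenvalues_eq_zero_iff.mpr rfl]
  simp

theorem negMulLog_trace_add_mul_sent_smul {M : Matrix n n ℂ} (hM : M.PosSemidef) :
    Real.negMulLog M.trace.re / Real.log 2 +
        M.trace.re * Sent ((M.trace.re : ℂ)⁻¹ • M) = Sent M := by
  have hv := isEigenbasis_eigenvectorBasis hM.1
  have htrace : M.trace.re = ∑ i, hM.1.eigenvalues i := by
    simp [hM.1.trace_eq_sum_eigenvalues]
  rw [← Complex.ofReal_inv, (hv.smul _).sent_eq, hv.sent_eq, ← Finset.sum_div, ← Finset.sum_div,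
    Real.sum_negMulLog_eq_negMulLog_sum_add hM.eigenvalues_nonneg, htrace, add_div,
    mul_div_assoc]
  rfl

end Eigenbasis

section Pinching

variable {n ι : Type*} [Fintype n] [DecidableEq n] [Fintype ι] [DecidableEq ι]

def OrthogonalIsometries (V : ι → Matrix (n × ι) n ℂ) : Prop :=
  ∀ k l, (V k)ᴴ * V l = if k = l then 1 else 0

variable {V : ι → Matrix (n × ι) n ℂ}

theorem OrthogonalIsometries.sum_conj_mul (hV : OrthogonalIsometries V)
    (M : ι → Matrix n n ℂ) (k : ι) :
    (∑ l, V l * M l * (V l)ᴴ) * V k = V k * M k := by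
  rw [Matrix.sum_mul, Finset.sum_eq_single k]
  · rw [Matrix.mul_assoc, hV, if_pos rfl, Matrix.mul_one]
  · intro l _ hl
    rw [Matrix.mul_assoc, hV, if_neg hl, Matrix.mul_zero]
  · simp

theorem OrthogonalIsometries.isEigenbasis_sum_conj (hV : OrthogonalIsometries V)
    {M : ι → Matrix n n ℂ} {u : ι → n → n → ℂ} {ν : ι → n → ℝ}
    (hM : ∀ k, IsEigenbasis (M k) (u k) (ν k)) :
    IsEigenbasis (∑ k, V k * M k * (V k)ᴴ) (fun p => V p.2 *ᵥ u p.2 p.1)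
      (fun p => ν p.2 p.1) := by
  refine ⟨?_, ?_⟩
  · rintro ⟨i, k⟩ ⟨j, l⟩
    rw [star_mulVec_dotProduct_mulVec, hV]
    rcases eq_or_ne k l with rfl | hkl
    · simp [(hM k).1 i j, Prod.ext_iff]
    · simp [hkl, Prod.ext_iff]
  · rintro ⟨i, k⟩
    rw [mulVec_mulVec, hV.sum_conj_mul, ← mulVec_mulVec, (hM k).2, mulVec_smul]

theorem OrthogonalIsometries.sent_sum_conj (hV : OrthogonalIsometries V)
    {M : ι → Matrix n n ℂ} (hM : ∀ k, (M k).IsHermitian) :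
    Sent (∑ k, V k * M k * (V k)ᴴ) = ∑ k, Sent (M k) := by
  rw [(hV.isEigenbasis_sum_conj fun k => isEigenbasis_eigenvectorBasis (hM k)).sent_eq,
    Fintype.sum_prod_type_right]
  exact Finset.sum_congr rfl fun k _ => by rw [Sent, dif_pos (hM k)]

theorem OrthogonalIsometries.sent_conj (hV : OrthogonalIsometries V) {N : Matrix n n ℂ}
    (hN : N.IsHermitian) (k : ι) :
    Sent (V k * N * (V k)ᴴ) = Sent N := by
  have hsingle : ∀ l, (Pi.single k N : ι → Matrix n n ℂ) l |>.IsHermitian := fun l => by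
    rcases eq_or_ne l k with rfl | hl
    · simpa using hN
    · simp [hl]
  have h := hV.sent_sum_conj hsingle
  rwa [Finset.sum_eq_single k (fun l _ hl => by simp [hl]) (by simp),
    Finset.sum_eq_single k (fun l _ hl => by simp [hl, sent_zero]) (by simp),
    Pi.single_eq_same] at h

theorem OrthogonalIsometries.sent_le_sent_sum_conj (hV : OrthogonalIsometries V)
    {ρ : Matrix (n × ι) (n × ι) ℂ} (hρ : ρ.PosSemidef) :
    Sent ρ ≤ Sent (∑ k, V k * ((V k)ᴴ * ρ * V k) * (V k)ᴴ) := by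
  have hM : ∀ k, ((V k)ᴴ * ρ * V k).PosSemidef := fun k => hρ.conjTranspose_mul_mul_same _
  have hu := fun k => isEigenbasis_eigenvectorBasis (hM k).1
  have hw := hV.isEigenbasis_sum_conj hu
  rw [Sent, dif_pos hρ.1, hw.sent_eq, ← Finset.sum_div, ← Finset.sum_div]
  refine div_le_div_of_nonneg_right ?_ (Real.log_nonneg one_le_two)
  refine (sum_negMulLog_eigenvalues_le hρ hw.1).trans_eq (Finset.sum_congr rfl fun p _ => ?_)
  rw [mulVec_mulVec, star_mulVec_dotProduct_mulVec, ← Matrix.mul_assoc,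
    (hu p.2).star_dotProduct_mulVec_self, Complex.ofReal_re]

end Pinching

/-- The isometry `u ↦ u ⊗ v`. -/
def kronCol {n : Type*} (m : Type*) [DecidableEq m] (v : n → ℂ) : Matrix (m × n) m ℂ :=
  of fun p j => if p.1 = j then v p.2 else 0

section Measurement

variable {m n : Type*} [DecidableEq m]

theorem kronCol_conjTranspose_mul_kronCol [Fintype m] [Fintype n] (v w : n → ℂ) :
    (kronCol m v)ᴴ * kronCol m w = (star v ⬝ᵥ w) • (1 : Matrix m m ℂ) := by
  ext i j
  simp only [kronCol, Matrix.mul_apply, conjTranspose_apply, of_apply, Fintype.sum_prod_type]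
  rcases eq_or_ne i j with rfl | hij
  · simp [dotProduct]
  · simp [hij, Ne.symm hij]

theorem kronCol_mul_mul_conjTranspose [Fintype m] (v : n → ℂ) (N : Matrix m m ℂ) :
    kronCol m v * N * (kronCol m v)ᴴ = N ⊗ₖ proj v := by
  ext ⟨i, p⟩ ⟨j, q⟩
  simp [kronCol, proj, Matrix.mul_apply, apply_ite (starRingEnd ℂ), vecMulVec_apply]
  ring

theorem ONB.orthogonalIsometries_kronCol [Fintype m] [Fintype n] [DecidableEq n]
    {e : n → n → ℂ} (he : ONB e) : OrthogonalIsometries fun k => kronCol m (e k) := by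
  intro k l
  rw [kronCol_conjTranspose_mul_kronCol, he]
  split_ifs <;> simp

theorem one_kronecker_proj_mul_mul [Fintype m] [Fintype n] (v : n → ℂ)
    (ρ : Matrix (m × n) (m × n) ℂ) :
    ((1 : Matrix m m ℂ) ⊗ₖ proj v) * ρ * ((1 : Matrix m m ℂ) ⊗ₖ proj v) =
      kronCol m v * ((kronCol m v)ᴴ * ρ * kronCol m v) * (kronCol m v)ᴴ := by
  rw [← kronCol_mul_mul_conjTranspose (m := m) v 1]
  simp only [Matrix.mul_one, Matrix.mul_assoc]

theorem pinchA_eq_sum [Fintype m] [Fintype n] (e : n → n → ℂ) (ρ : Matrix (m × n) (m × n) ℂ) :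
    pinchA e ρ = ∑ k, kronCol m (e k) * ((kronCol m (e k))ᴴ * ρ * kronCol m (e k)) *
      (kronCol m (e k))ᴴ :=
  Finset.sum_congr rfl fun k _ => one_kronecker_proj_mul_mul (e k) ρ

theorem pOut_eq_trace [Fintype m] [Fintype n] (e : n → n → ℂ) (ρ : Matrix (m × n) (m × n) ℂ)
    (k : n) : pOut e ρ k = ((kronCol m (e k))ᴴ * ρ * kronCol m (e k)).trace.re := by
  rw [pOut, ← Matrix.mul_one (1 : Matrix m m ℂ), ← kronCol_mul_mul_conjTranspose,
    Matrix.mul_assoc, trace_mul_comm]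
  simp only [Matrix.mul_one, Matrix.mul_assoc]

end Measurement

section Demon

variable {e : a → a → ℂ} {ρ : Matrix (s × a) (s × a) ℂ}

theorem sent_pinchA (hρ : ρ.PosSemidef) (he : ONB e) :
    Sent (pinchA e ρ) = ∑ k, Sent ((kronCol s (e k))ᴴ * ρ * kronCol s (e k)) := by
  rw [pinchA_eq_sum, he.orthogonalIsometries_kronCol.sent_sum_conj
    fun k => (hρ.conjTranspose_mul_mul_same _).1]

theorem negMulLog_pOut_add_mul_sent_postState (hρ : ρ.PosSemidef) (he : ONB e) (k : a) :
    Real.negMulLog (pOut e ρ k) / Real.log 2 + pOut e ρ k * Sent (postState e ρ k) =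
      Sent ((kronCol s (e k))ᴴ * ρ * kronCol s (e k)) := by
  have hM := hρ.conjTranspose_mul_mul_same (kronCol s (e k))
  rw [postState, one_kronecker_proj_mul_mul, ← Matrix.smul_mul, ← Matrix.mul_smul,
    he.orthogonalIsometries_kronCol.sent_conj, pOut_eq_trace]
  · exact negMulLog_trace_add_mul_sent_smul hM
  · exact hM.1.smul (by simp [IsSelfAdjoint, Complex.conj_ofReal])

theorem sent_le_sent_pinchA (hρ : ρ.PosSemidef) (he : ONB e) : Sent ρ ≤ Sent (pinchA e ρ) := by
  rw [pinchA_eq_sum]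
  exact he.orthogonalIsometries_kronCol.sent_le_sent_sum_conj hρ

end Demon

open scoped ComplexOrder in
theorem classical_work_le_quantum_work_general
    (ρ : Matrix (s × a) (s × a) ℂ) (hρ : ρ.PosSemidef)
    (e : a → a → ℂ) (he : ONB e) (k T : ℝ) (hk : 0 < k) (hT : 0 < T) :
    ((∑ j, Real.negMulLog (pOut e ρ j) / Real.log 2) +
        ∑ j, pOut e ρ j * Sent (postState e ρ j)) = Sent (pinchA e ρ) ∧
      k * T * (Real.logb 2 (Fintype.card (s × a)) - Sent (pinchA e ρ)) ≤
        k * T * (Real.logb 2 (Fintype.card (s × a)) - Sent ρ) := by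
  refine ⟨?_, ?_⟩
  · rw [← Finset.sum_add_distrib, sent_pinchA hρ he]
    exact Finset.sum_congr rfl fun j _ => negMulLog_pOut_add_mul_sent_postState hρ he j
  · have hle := sent_le_sent_pinchA hρ he
    exact mul_le_mul_of_nonneg_left (by linarith) (mul_pos hk hT).le

open scoped ComplexOrder in
/-- The locally accessible joint entropy `S_A(ρ_SA) = H({p_a}) + S(ρ_S|{Π_A^k})`
equals `S(Φ_A(ρ_SA))`, and hence the classical demon's work
`W^C = kT[log₂ d_SA − S_A(ρ_SA)]` never exceeds the quantum demon's work
`W^Q = kT[log₂ d_SA − S(ρ_SA)]`. -/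
theorem classical_work_le_quantum_work
    (ρ : Matrix (s × a) (s × a) ℂ) (hρ : ρ.PosSemidef) (htr : ρ.trace = 1)
    (e : a → a → ℂ) (he : ONB e) (k T : ℝ) (hk : 0 < k) (hT : 0 < T) :
    ((∑ j, Real.negMulLog (pOut e ρ j) / Real.log 2) +
        ∑ j, pOut e ρ j * Sent (postState e ρ j)) = Sent (pinchA e ρ) ∧
      k * T * (Real.logb 2 (Fintype.card (s × a)) - Sent (pinchA e ρ)) ≤
        k * T * (Real.logb 2 (Fintype.card (s × a)) - Sent ρ) :=
  classical_work_le_quantum_work_general ρ hρ e he k T hk hT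
end

section
/- (Chain decomposition) For an n-partite density operator ρ and any fixed product projective measurement Φ_{A₁⋯Aₙ}, the fixed-measurement global discord D_Φ(A₁:⋯:Aₙ) = S(Φ_{A₁⋯Aₙ}(ρ)) − S(ρ) decomposes as D_Φ(A₁:⋯:Aₙ) = Σ_{i=1}^{n} D_Φ(Φ_{A₁⋯A_{i−1}}(ρ) | A_i), where D_Φ(σ|A_i) = I(σ) − I(Φ_{A_i}(σ)) + H({p_{a_i}}) − S(σ_{A_i}), I is the multipartite mutual information, and Φ_{A₁⋯A₀} is the identity map. -/
open Matrix BigOperators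

section Multi
variable {n : ℕ} {m : Fin n → Type*} [∀ i, Fintype (m i)] [∀ i, DecidableEq (m i)]

/-- The operator `I ⊗ ⋯ ⊗ A ⊗ ⋯ ⊗ I` acting as `A` on subsystem `i`. -/
def embedAt (i : Fin n) (A : Matrix (m i) (m i) ℂ) :
    Matrix (∀ j, m j) (∀ j, m j) ℂ :=
  Matrix.of fun x y =>
    A (x i) (y i) * ∏ j ∈ Finset.univ.erase i, (if x j = y j then (1 : ℂ) else 0)

/-- Tensor product of local operators. -/
def prodMat (M : ∀ i, Matrix (m i) (m i) ℂ) : Matrix (∀ i, m i) (∀ i, m i) ℂ :=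
  Matrix.of fun x y => ∏ i, M i (x i) (y i)

/-- Marginal (reduced density operator) on subsystem `i`. -/
noncomputable def marginal (ρ : Matrix (∀ j, m j) (∀ j, m j) ℂ) (i : Fin n) :
    Matrix (m i) (m i) ℂ :=
  Matrix.of fun a b => ∑ f : ∀ j, m j, if f i = a then ρ f (Function.update f i b) else 0

/-- Non-selective rank-one projective measurement on subsystem `i` in the basis `e`. -/
noncomputable def pinchAt (i : Fin n) (e : m i → m i → ℂ)
    (ρ : Matrix (∀ j, m j) (∀ j, m j) ℂ) : Matrix (∀ j, m j) (∀ j, m j) ℂ :=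
  ∑ k : m i, embedAt i (proj (e k)) * ρ * embedAt i (proj (e k))

/-- Non-selective local measurements on subsystems `A₁,…,A_k` (in the bases `e`). -/
noncomputable def pinchUpTo (e : ∀ i, m i → m i → ℂ) :
    ℕ → Matrix (∀ j, m j) (∀ j, m j) ℂ → Matrix (∀ j, m j) (∀ j, m j) ℂ
  | 0 => id
  | (k + 1) => fun ρ =>
      if h : k < n then pinchAt ⟨k, h⟩ (e ⟨k, h⟩) (pinchUpTo e k ρ)
      else pinchUpTo e k ρ

/-- Multipartite mutual information `I(σ) = Σ_k S(σ_{A_k}) − S(σ)`. -/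
noncomputable def Imut (σ : Matrix (∀ j, m j) (∀ j, m j) ℂ) : ℝ :=
  (∑ i, Sent (marginal σ i)) - Sent σ

/-- Shannon entropy (base 2) of the outcome distribution of the measurement of
subsystem `i` in basis `e`, in state `σ`. -/
noncomputable def Hmeas (i : Fin n) (e : m i → m i → ℂ)
    (σ : Matrix (∀ j, m j) (∀ j, m j) ℂ) : ℝ :=
  ∑ k : m i, Real.negMulLog ((embedAt i (proj (e k)) * σ).trace.re) / Real.log 2

/-- Fixed-measurement asymmetric thermal discord
`D_Φ(σ|A_i) = I(σ) − I(Φ_{A_i}(σ)) + H({p_{a_i}}) − S(σ_{A_i})`. -/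
noncomputable def DPhiAt (i : Fin n) (e : m i → m i → ℂ)
    (σ : Matrix (∀ j, m j) (∀ j, m j) ℂ) : ℝ :=
  Imut σ - Imut (pinchAt i e σ) + Hmeas i e σ - Sent (marginal σ i)

/-- Asymmetric thermal discord `D_th(σ|A_i)`, minimized over measurements on `A_i`. -/
noncomputable def DthAt (i : Fin n) (σ : Matrix (∀ j, m j) (∀ j, m j) ℂ) : ℝ :=
  sInf {x : ℝ | ∃ e : m i → m i → ℂ, ONB e ∧ x = DPhiAt i e σ}

/-- Thermal global quantum discord. -/
noncomputable def GQD (ρ : Matrix (∀ j, m j) (∀ j, m j) ℂ) : ℝ :=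
  sInf {x : ℝ | ∃ e : ∀ i, m i → m i → ℂ,
    (∀ i, ONB (e i)) ∧ x = Sent (pinchUpTo e n ρ) - Sent ρ}

end Multi

/-!
Measuring subsystem `i` in an orthonormal basis `e` leaves the marginal of every other subsystem
unchanged and replaces the marginal on `i` by `∑ₖ pₖ |eₖ⟩⟨eₖ|`, whose entropy is the Shannon
entropy of the outcome distribution `p`. So all marginal entropies in `D_Φ(σ|A_i)` cancel and
`D_Φ(σ|A_i) = S(Φ_{A_i}(σ)) − S(σ)`; for `σ = Φ_{A₁⋯A_{i−1}}(ρ)` the sum over `i` telescopes.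
Both facts about marginals come from `marginal σ i a b = tr(σ · (|b⟩⟨a| on A_i))`, cyclicity of
the trace, and commutation of operators acting on different subsystems.
-/

section EmbedAt
variable {n : ℕ} {m : Fin n → Type*}

theorem prodMat_mul [∀ i, Fintype (m i)] (M N : ∀ i, Matrix (m i) (m i) ℂ) :
    prodMat M * prodMat N = prodMat (M * N) := by
  ext x y
  simp only [prodMat, mul_apply, of_apply, Pi.mul_apply, Fintype.prod_sum,
    ← Finset.prod_mul_distrib]

variable [∀ i, DecidableEq (m i)]

theorem prodMat_one : prodMat (1 : ∀ i, Matrix (m i) (m i) ℂ) = 1 := by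
  ext x y
  simp only [prodMat, of_apply, Pi.one_apply, one_apply, Finset.prod_boole, funext_iff,
    Finset.mem_univ, true_imp_iff]

theorem embedAt_eq_prodMat (i : Fin n) (A : Matrix (m i) (m i) ℂ) :
    embedAt i A = prodMat (Function.update 1 i A) := by
  ext x y
  rw [embedAt, prodMat, of_apply, of_apply, ← Finset.mul_prod_erase _ _ (Finset.mem_univ i),
    Function.update_self]
  refine congrArg (A (x i) (y i) * ·) (Finset.prod_congr rfl fun j hj => ?_)
  rw [Function.update_of_ne (Finset.ne_of_mem_erase hj), Pi.one_apply, one_apply]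

theorem embedAt_one (i : Fin n) : embedAt i (1 : Matrix (m i) (m i) ℂ) = 1 := by
  rw [embedAt_eq_prodMat, Function.update_one, prodMat_one]

theorem embedAt_sum {ι : Type*} (s : Finset ι) (i : Fin n) (A : ι → Matrix (m i) (m i) ℂ) :
    embedAt i (∑ k ∈ s, A k) = ∑ k ∈ s, embedAt i (A k) := by
  ext x y
  simp [embedAt, Matrix.sum_apply, Finset.sum_mul]

theorem embedAt_smul (i : Fin n) (c : ℂ) (A : Matrix (m i) (m i) ℂ) :
    embedAt i (c • A) = c • embedAt i A := by
  ext x y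
  simp [embedAt, mul_assoc]

theorem embedAt_conjTranspose (i : Fin n) (A : Matrix (m i) (m i) ℂ) :
    (embedAt i A)ᴴ = embedAt i Aᴴ := by
  ext x y
  simp [embedAt, eq_comm]

theorem isHermitian_embedAt {i : Fin n} {A : Matrix (m i) (m i) ℂ} (hA : A.IsHermitian) :
    (embedAt i A).IsHermitian :=
  (embedAt_conjTranspose i A).trans (congrArg _ hA)

variable [∀ i, Fintype (m i)]

theorem embedAt_mul_embedAt (i : Fin n) (A B : Matrix (m i) (m i) ℂ) :
    embedAt i A * embedAt i B = embedAt i (A * B) := by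
  rw [embedAt_eq_prodMat, embedAt_eq_prodMat, embedAt_eq_prodMat, prodMat_mul,
    ← Function.update_mul, mul_one]

theorem embedAt_commute {i j : Fin n} (hij : i ≠ j) (A : Matrix (m i) (m i) ℂ)
    (B : Matrix (m j) (m j) ℂ) : Commute (embedAt i A) (embedAt j B) := by
  rw [embedAt_eq_prodMat, embedAt_eq_prodMat, Commute, SemiconjBy, prodMat_mul, prodMat_mul]
  congr 1
  funext l
  by_cases hli : l = i
  · subst hli; simp [Function.update_of_ne hij]
  · by_cases hlj : l = j
    · subst hlj; simp [Function.update_of_ne hli]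
    · simp [Function.update_of_ne hli, Function.update_of_ne hlj]

end EmbedAt

theorem isHermitian_proj {d : Type*} (v : d → ℂ) : (proj v).IsHermitian := by
  rw [IsHermitian, proj, conjTranspose_vecMulVec, star_star]

theorem proj_mul_mul_proj {d : Type*} [Fintype d] (v : d → ℂ) (M : Matrix d d ℂ) :
    proj v * M * proj v = (star v ⬝ᵥ M *ᵥ v) • proj v := by
  rw [proj, vecMulVec_mul, mul_vecMulVec, vecMulVec_mulVec, ← dotProduct_mulVec, op_smul_eq_smul]
  ext a b
  simp only [vecMulVec_apply, Pi.smul_apply, Matrix.smul_apply, smul_eq_mul, mul_assoc]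

theorem Matrix.IsHermitian.ofReal_re_trace_mul {d : Type*} [Fintype d] {A B : Matrix d d ℂ}
    (hA : A.IsHermitian) (hB : B.IsHermitian) : (((A * B).trace.re : ℝ) : ℂ) = (A * B).trace :=
  Complex.conj_eq_iff_re.mp <| by
    show star (A * B).trace = _
    rw [← trace_conjTranspose, conjTranspose_mul, hA.eq, hB.eq, trace_mul_comm]

open Polynomial in
theorem sent_eq_sum_negMulLog_of_charpoly_eq {d : Type*} [Fintype d] [DecidableEq d]
    {M : Matrix d d ℂ} (hM : M.IsHermitian) (r : d → ℝ)
    (h : M.charpoly = ∏ k, (X - C (r k : ℂ))) :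
    Sent M = ∑ k, Real.negMulLog (r k) / Real.log 2 := by
  have hroots := hM.roots_charpoly_eq_eigenvalues
  rw [h, roots_prod _ _ (by simp [Finset.prod_ne_zero_iff, X_sub_C_ne_zero])] at hroots
  have hsum := congrArg (fun s => (s.map fun z : ℂ => Real.negMulLog z.re / Real.log 2).sum) hroots
  simp only [roots_X_sub_C, Multiset.bind_singleton, Multiset.map_map, Function.comp_apply,
    Complex.ofReal_re, Finset.sum_map_val, Complex.coe_algebraMap] at hsum
  rw [Sent, dif_pos hM, hsum]

section ONB
variable {d : Type*} [Fintype d] [DecidableEq d]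

-- `(of e)ᵀ` has the vectors `e k` as columns; it is unitary exactly when `e` is orthonormal.
theorem sum_smul_proj_eq_mul_diagonal_mul (e : d → d → ℂ) (r : d → ℂ) :
    ∑ k, r k • proj (e k) = (of e)ᵀ * diagonal r * ((of e)ᵀ)ᴴ := by
  ext a b
  simp [proj, Matrix.sum_apply, mul_apply, diagonal_apply, vecMulVec_apply, mul_ite,
    Finset.sum_ite_eq', mul_left_comm, mul_assoc]

variable {e : d → d → ℂ}

theorem ONB.conjTranspose_mul_self_s6 (he : ONB e) : ((of e)ᵀ)ᴴ * (of e)ᵀ = 1 := by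
  ext k l
  simpa [mul_apply, one_apply, dotProduct] using he k l

theorem ONB.sum_proj (he : ONB e) : ∑ k, proj (e k) = 1 := by
  calc ∑ k, proj (e k) = ∑ k, (fun _ => (1 : ℂ)) k • proj (e k) := by simp
    _ = 1 := by
      rw [sum_smul_proj_eq_mul_diagonal_mul, diagonal_one, Matrix.mul_one,
        mul_eq_one_comm.mp he.conjTranspose_mul_self_s6]

theorem ONB.proj_mul_self (he : ONB e) (k : d) : proj (e k) * proj (e k) = proj (e k) := by
  rw [proj, vecMulVec_mul_vecMulVec, he k k, if_pos rfl, one_smul]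

theorem ONB.sent_sum_smul_proj (he : ONB e) (r : d → ℝ) :
    Sent (∑ k, (r k : ℂ) • proj (e k)) = ∑ k, Real.negMulLog (r k) / Real.log 2 := by
  rw [sum_smul_proj_eq_mul_diagonal_mul]
  refine sent_eq_sum_negMulLog_of_charpoly_eq
    (isHermitian_mul_mul_conjTranspose _ (isHermitian_diagonal_of_self_adjoint _ ?_)) r ?_
  · ext k; simp
  · rw [Matrix.mul_assoc, charpoly_mul_comm, Matrix.mul_assoc,
      he.conjTranspose_mul_self_s6, Matrix.mul_one, charpoly_diagonal]

end ONB

section Marginal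
variable {n : ℕ} {m : Fin n → Type*} [∀ i, Fintype (m i)] [∀ i, DecidableEq (m i)]

theorem marginal_apply_eq_trace (σ : Matrix (∀ j, m j) (∀ j, m j) ℂ) (i : Fin n) (a b : m i) :
    marginal σ i a b = trace (σ * embedAt i (single b a 1)) := by
  have hembed : ∀ x y : ∀ j, m j, embedAt i (single b a 1) y x =
      if x i = a then (if y = Function.update x i b then 1 else 0) else 0 := by
    intro x y
    simp only [embedAt, of_apply, single_apply, Finset.prod_boole, Function.eq_update_iff,
      Finset.mem_erase, Finset.mem_univ, and_true]
    split_ifs <;> simp_all [eq_comm]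
  simp only [marginal, trace, diag_apply, mul_apply, of_apply, hembed]
  refine Finset.sum_congr rfl fun x _ => ?_
  split_ifs <;> simp

theorem marginal_sum {ι : Type*} (s : Finset ι) (σ : ι → Matrix (∀ j, m j) (∀ j, m j) ℂ)
    (i : Fin n) : marginal (∑ k ∈ s, σ k) i = ∑ k ∈ s, marginal (σ k) i := by
  ext a b
  simp only [marginal_apply_eq_trace, Finset.sum_mul, trace_sum, Matrix.sum_apply]

theorem trace_embedAt_mul_mul_embedAt_mul (σ : Matrix (∀ j, m j) (∀ j, m j) ℂ) (i : Fin n)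
    (A B : Matrix (m i) (m i) ℂ) (C : Matrix (∀ j, m j) (∀ j, m j) ℂ) :
    trace (embedAt i A * σ * embedAt i B * C) = trace (σ * embedAt i B * C * embedAt i A) := by
  rw [Matrix.mul_assoc, Matrix.mul_assoc, trace_mul_comm]
  simp only [Matrix.mul_assoc]

theorem marginal_embedAt_mul_mul_embedAt_of_ne {i j : Fin n} (hij : i ≠ j)
    (σ : Matrix (∀ j, m j) (∀ j, m j) ℂ) (A B : Matrix (m i) (m i) ℂ) :
    marginal (embedAt i A * σ * embedAt i B) j = marginal (σ * embedAt i (B * A)) j := by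
  ext a b
  rw [marginal_apply_eq_trace, marginal_apply_eq_trace, trace_embedAt_mul_mul_embedAt_mul,
    mul_assoc (σ * _), ← (embedAt_commute hij _ _).eq, ← mul_assoc, mul_assoc σ,
    embedAt_mul_embedAt]

theorem marginal_embedAt_proj_mul_mul_embedAt_proj (σ : Matrix (∀ j, m j) (∀ j, m j) ℂ)
    (i : Fin n) (v : m i → ℂ) :
    marginal (embedAt i (proj v) * σ * embedAt i (proj v)) i
      = trace (embedAt i (proj v) * σ) • proj v := by
  ext a b
  rw [marginal_apply_eq_trace, trace_embedAt_mul_mul_embedAt_mul, mul_assoc σ, mul_assoc σ,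
    embedAt_mul_embedAt, embedAt_mul_embedAt, proj_mul_mul_proj, embedAt_smul,
    Matrix.mul_smul, trace_smul, Matrix.smul_apply, trace_mul_comm σ]
  simp [proj, vecMulVec_apply, dotProduct, mulVec, single_apply, ite_and, mul_comm]

end Marginal

section Pinch
variable {n : ℕ} {m : Fin n → Type*} [∀ i, Fintype (m i)] [∀ i, DecidableEq (m i)]

theorem isHermitian_pinchAt (i : Fin n) (e : m i → m i → ℂ)
    {σ : Matrix (∀ j, m j) (∀ j, m j) ℂ} (hσ : σ.IsHermitian) : (pinchAt i e σ).IsHermitian := by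
  refine isSelfAdjoint_sum _ fun k _ => ?_
  have hP : (embedAt i (proj (e k))).IsHermitian := isHermitian_embedAt (isHermitian_proj (e k))
  have := isHermitian_mul_mul_conjTranspose (embedAt i (proj (e k))) hσ
  rwa [hP.eq] at this

theorem isHermitian_pinchUpTo (e : ∀ i, m i → m i → ℂ) {ρ : Matrix (∀ j, m j) (∀ j, m j) ℂ}
    (hρ : ρ.IsHermitian) (k : ℕ) : (pinchUpTo e k ρ).IsHermitian := by
  induction k with
  | zero => exact hρ
  | succ k ih =>
    unfold pinchUpTo
    split_ifs
    exacts [isHermitian_pinchAt _ _ ih, ih]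

theorem pinchUpTo_succ (e : ∀ i, m i → m i → ℂ) (ρ : Matrix (∀ j, m j) (∀ j, m j) ℂ)
    (i : Fin n) : pinchUpTo e (i + 1) ρ = pinchAt i (e i) (pinchUpTo e i ρ) :=
  dif_pos i.isLt

variable {i : Fin n} {e : m i → m i → ℂ}

theorem marginal_pinchAt_of_ne {j : Fin n} (hij : i ≠ j) (he : ONB e)
    (σ : Matrix (∀ j, m j) (∀ j, m j) ℂ) : marginal (pinchAt i e σ) j = marginal σ j := by
  rw [pinchAt, marginal_sum]
  simp_rw [marginal_embedAt_mul_mul_embedAt_of_ne hij, he.proj_mul_self]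
  rw [← marginal_sum, ← Matrix.mul_sum, ← embedAt_sum, he.sum_proj, embedAt_one, Matrix.mul_one]

theorem marginal_pinchAt_self (σ : Matrix (∀ j, m j) (∀ j, m j) ℂ) :
    marginal (pinchAt i e σ) i = ∑ k, trace (embedAt i (proj (e k)) * σ) • proj (e k) := by
  rw [pinchAt, marginal_sum]
  exact Finset.sum_congr rfl fun k _ => marginal_embedAt_proj_mul_mul_embedAt_proj σ i (e k)

theorem sent_marginal_pinchAt_self (he : ONB e) {σ : Matrix (∀ j, m j) (∀ j, m j) ℂ}
    (hσ : σ.IsHermitian) : Sent (marginal (pinchAt i e σ) i) = Hmeas i e σ := by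
  have hreal : ∀ k, ((trace (embedAt i (proj (e k)) * σ)).re : ℂ)
      = trace (embedAt i (proj (e k)) * σ) :=
    fun k => (isHermitian_embedAt (isHermitian_proj (e k))).ofReal_re_trace_mul hσ
  rw [marginal_pinchAt_self, Hmeas, ← he.sent_sum_smul_proj]
  exact congrArg Sent (Finset.sum_congr rfl fun k _ => by rw [hreal])

theorem DPhiAt_eq_sent_pinchAt_sub (he : ONB e) {σ : Matrix (∀ j, m j) (∀ j, m j) ℂ}
    (hσ : σ.IsHermitian) : DPhiAt i e σ = Sent (pinchAt i e σ) - Sent σ := by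
  have hmarginals : ∑ j, Sent (marginal (pinchAt i e σ) j) - ∑ j, Sent (marginal σ j)
      = Hmeas i e σ - Sent (marginal σ i) := by
    rw [← Finset.sum_sub_distrib, Finset.sum_eq_single i
      (fun j _ hji => by rw [marginal_pinchAt_of_ne (Ne.symm hji) he, sub_self]) (by simp),
      sent_marginal_pinchAt_self he hσ]
  rw [DPhiAt, Imut, Imut]
  linarith

end Pinch

open scoped ComplexOrder in
theorem chain_decomposition_general {n : ℕ} {m : Fin n → Type*}
    [∀ i, Fintype (m i)] [∀ i, DecidableEq (m i)]
    (ρ : Matrix (∀ j, m j) (∀ j, m j) ℂ) (hρ : ρ.PosSemidef)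
    (e : ∀ i, m i → m i → ℂ) (he : ∀ i, ONB (e i)) :
    Sent (pinchUpTo e n ρ) - Sent ρ =
      ∑ i : Fin n, DPhiAt i (e i) (pinchUpTo e i.val ρ) := by
  have hstep : ∀ i : Fin n, DPhiAt i (e i) (pinchUpTo e i ρ)
      = Sent (pinchUpTo e (i + 1) ρ) - Sent (pinchUpTo e i ρ) := fun i => by
    rw [DPhiAt_eq_sent_pinchAt_sub (he i) (isHermitian_pinchUpTo e hρ.isHermitian i),
      pinchUpTo_succ]
  rw [Finset.sum_congr rfl fun i _ => hstep i,
    Fin.sum_univ_eq_sum_range (fun k => Sent (pinchUpTo e (k + 1) ρ) - Sent (pinchUpTo e k ρ)),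
    Finset.sum_range_sub (fun k => Sent (pinchUpTo e k ρ))]
  rfl

open scoped ComplexOrder in
/-- Chain decomposition: for a fixed product projective measurement `Φ`, the
fixed-measurement global discord decomposes as
`D_Φ(A₁:⋯:Aₙ) = S(Φ_{A₁⋯Aₙ}(ρ)) − S(ρ) = Σᵢ D_Φ(Φ_{A₁⋯A_{i−1}}(ρ)|A_i)`. -/
theorem chain_decomposition {n : ℕ} {m : Fin n → Type*}
    [∀ i, Fintype (m i)] [∀ i, DecidableEq (m i)]
    (ρ : Matrix (∀ j, m j) (∀ j, m j) ℂ) (hρ : ρ.PosSemidef) (htr : ρ.trace = 1)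
    (e : ∀ i, m i → m i → ℂ) (he : ∀ i, ONB (e i)) :
    Sent (pinchUpTo e n ρ) - Sent ρ =
      ∑ i : Fin n, DPhiAt i (e i) (pinchUpTo e i.val ρ) :=
  chain_decomposition_general ρ hρ e he
end
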